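/- For ν = 1 and φ = 1, the half-Cauchy mixture marginal density of the horseshoe prior satisfies the lower bound p(β) ≥ (1/(2π)^{3/2}) · log(1 + 2/β²) for all β ≠ 0; in particular p(β) → ∞ as β → 0. -/

import Mathlib

open Real MeasureTheory Filter Set

section Aux
open Topology

lemma log_ge_self_div (x : ℝ) (hx : 0 ≤ x) : x / (1 + x) ≤ Real.log (1 + x) := by
  have h1 : (0:ℝ) < 1 + x := by linarith
  have h2 := Real.log_le_sub_one_of_pos (x := (1+x)⁻¹) (by positivity)
  rw [Real.log_inv] at h2
  have : Real.log (1+x) ≥ 1 - (1+x)⁻¹ := by linarith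
  have : x / (1+x) = 1 - (1+x)⁻¹ := by field_simp; ring
  linarith

lemma pade_log (x : ℝ) (hx : 0 ≤ x) : 2*x/(x+2) ≤ Real.log (1+x) := by
  set F : ℝ → ℝ := fun x => (x+2) * Real.log (1+x) - 2*x with hF
  have key : ∀ y : ℝ, 0 ≤ y → 0 ≤ F y := by
    have hderiv : ∀ y : ℝ, 0 < y → HasDerivAt F (Real.log (1+y) + (y+2)/(1+y) - 2) y := by
      intro y hy
      have h1 : (0:ℝ) < 1 + y := by linarith
      have hlog : HasDerivAt (fun y : ℝ => Real.log (1+y)) (1/(1+y)) y := by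
        simpa [Function.comp_def] using ((Real.hasDerivAt_log h1.ne').comp y ((hasDerivAt_id y).const_add 1))
      have := ((hasDerivAt_id y).add_const 2).mul hlog
      have h2 := (this.sub ((hasDerivAt_id y).const_mul 2))
      refine h2.congr_deriv ?_
      simp only [id_eq]; ring
    have hmono : MonotoneOn F (Ici (0:ℝ)) := by
      apply monotoneOn_of_deriv_nonneg (convex_Ici 0)
      · apply ContinuousOn.sub
        · exact (continuousOn_id.add continuousOn_const).mul
            ((Real.continuousOn_log.comp (continuousOn_const.add continuousOn_id)
              (fun y hy => by simp only [mem_Ici] at hy; intro h; simp at h; linarith)))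
        · exact continuousOn_const.mul continuousOn_id
      · intro y hy
        rw [interior_Ici] at hy
        exact (hderiv y hy).differentiableAt.differentiableWithinAt
      · intro y hy
        rw [interior_Ici] at hy
        rw [(hderiv y hy).deriv]
        have h1 : (0:ℝ) < 1 + y := by linarith [hy.out]
        have := log_ge_self_div y hy.out.le
        have : (y+2)/(1+y) - 2 = -(y/(1+y)) := by field_simp; ring
        linarith [log_ge_self_div y hy.out.le]
    intro y hy
    have := hmono (self_mem_Ici) (mem_Ici.mpr hy) hy
    simpa [hF] using this
  have h0 := key x hx
  rw [div_le_iff₀ (by linarith : (0:ℝ) < x + 2)]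
  simp only [hF] at h0
  linarith [h0]


lemma integral_lower (c : ℝ) (hc : 0 < c) :
    IntegrableOn (fun l => (1 - c/l^2)/(l*(1+l^2))) (Ioi (Real.sqrt c)) ∧
    ∫ l in Ioi (Real.sqrt c), (1 - c/l^2)/(l*(1+l^2))
      = (1+c)/2 * Real.log ((1+c)/c) - 1/2 := by
  set a := Real.sqrt c with ha
  have hapos : 0 < a := Real.sqrt_pos.mpr hc
  have ha2 : a^2 = c := Real.sq_sqrt hc.le
  set H : ℝ → ℝ := fun l => (1+c)/2 * (2*Real.log l - Real.log (1+l^2)) + c/2 * (l^2)⁻¹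
    with hH
  have hderiv : ∀ l ∈ Ici a, HasDerivAt H ((1 - c/l^2)/(l*(1+l^2))) l := by
    intro l hl
    have hl0 : 0 < l := lt_of_lt_of_le hapos hl
    have h1 : (0:ℝ) < 1 + l^2 := by positivity
    have d1 : HasDerivAt (fun l : ℝ => Real.log l) l⁻¹ l := Real.hasDerivAt_log hl0.ne'
    have dsq : HasDerivAt (fun l : ℝ => l^2) (2*l) l := by
      simpa using hasDerivAt_pow 2 l
    have d2 : HasDerivAt (fun l : ℝ => Real.log (1+l^2)) (2*l/(1+l^2)) l := by
      have := (Real.hasDerivAt_log h1.ne').comp l (dsq.const_add 1)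
      simpa [div_eq_mul_inv, mul_comm, Function.comp_def] using this
    have d3 : HasDerivAt (fun l : ℝ => (l^2)⁻¹) (-(2*l) / (l^2)^2) l := dsq.inv (by positivity)
    have := (((d1.const_mul 2).sub d2).const_mul ((1+c)/2)).add (d3.const_mul (c/2))
    refine this.congr_deriv ?_
    field_simp
    ring
  have htend : Tendsto H atTop (𝓝 0) := by
    have h1 : Tendsto (fun l : ℝ => 2*Real.log l - Real.log (1+l^2)) atTop (𝓝 0) := by
      have heq : ∀ᶠ l : ℝ in atTop, -Real.log (1 + (l^2)⁻¹) = 2*Real.log l - Real.log (1+l^2) := by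
        filter_upwards [eventually_gt_atTop (0:ℝ)] with l hl
        have h2 : (0:ℝ) < 1 + l^2 := by positivity
        rw [show (1 + (l^2)⁻¹) = (1+l^2)/l^2 by field_simp; ring,
          Real.log_div h2.ne' (by positivity), Real.log_pow]
        push_cast; ring
      refine Tendsto.congr' heq ?_
      have : Tendsto (fun l : ℝ => 1 + (l^2)⁻¹) atTop (𝓝 1) := by
        have : Tendsto (fun l : ℝ => (l^2)⁻¹) atTop (𝓝 0) := by
          apply Tendsto.inv_tendsto_atTop
          exact tendsto_pow_atTop (by norm_num)
        simpa using this.const_add 1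
      have hlog : Tendsto (fun x : ℝ => Real.log x) (𝓝 1) (𝓝 0) := by
        simpa using (Real.continuousAt_log one_ne_zero).tendsto
      simpa using (hlog.comp this).neg
    have h2 : Tendsto (fun l : ℝ => c/2 * (l^2)⁻¹) atTop (𝓝 0) := by
      have : Tendsto (fun l : ℝ => (l^2)⁻¹) atTop (𝓝 0) :=
        Tendsto.inv_tendsto_atTop (tendsto_pow_atTop (by norm_num))
      simpa using this.const_mul (c/2)
    simpa using (h1.const_mul ((1+c)/2)).add h2
  have hnonneg : ∀ l ∈ Ici a, 0 ≤ (1 - c/l^2)/(l*(1+l^2)) := by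
    intro l hl
    have hl0 : 0 < l := lt_of_lt_of_le hapos hl
    have : c ≤ l^2 := ha2 ▸ (pow_le_pow_left₀ hapos.le hl 2)
    have : c/l^2 ≤ 1 := (div_le_one (by positivity)).mpr this
    have : 0 ≤ 1 - c/l^2 := by linarith
    positivity
  constructor
  · exact integrableOn_Ioi_deriv_of_nonneg' hderiv (fun x hx => hnonneg x (Ioi_subset_Ici_self hx)) htend
  · rw [integral_Ioi_of_hasDerivAt_of_nonneg' hderiv (fun x hx => hnonneg x (Ioi_subset_Ici_self hx)) htend]
    have hHa : H a = -((1+c)/2 * Real.log ((1+c)/c)) + 1/2 := by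
      simp only [hH, ha2]
      rw [Real.log_div (by positivity) hc.ne']
      have : Real.log c = 2 * Real.log a := by
        rw [← ha2, show a^2 = a*a by ring, Real.log_mul hapos.ne' hapos.ne']; ring
      rw [this]
      field_simp
      ring
    rw [hHa]; ring

end Aux

/-- Marginal density of the horseshoe prior (half-Cauchy mixture of normals, ν = 1, φ = 1). -/
noncomputable def hsMarginal (β : ℝ) : ℝ :=
  ∫ l in Ioi (0 : ℝ),
    (1 / Real.sqrt (2 * Real.pi * l ^ 2)) * Real.exp (-β ^ 2 / (2 * l ^ 2)) *
      ((2 / Real.pi) * (1 + l ^ 2)⁻¹)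

lemma main_bound (β : ℝ) (hβ : β ≠ 0) :
    (1 / (2 * Real.pi) ^ ((3 : ℝ) / 2)) * Real.log (1 + 2 / β ^ 2) ≤ hsMarginal β := by
  set c : ℝ := β^2/2 with hc_def
  have hc : 0 < c := by positivity
  set a : ℝ := Real.sqrt c with ha_def
  have hapos : 0 < a := Real.sqrt_pos.mpr hc
  set S : ℝ := Real.sqrt (2*π) with hS_def
  have hSpos : 0 < S := Real.sqrt_pos.mpr (by positivity)
  set A : ℝ := 2/(π*S) with hA_def
  have hApos : 0 < A := by positivity
  set f : ℝ → ℝ := fun l =>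
    (1 / Real.sqrt (2 * π * l ^ 2)) * Real.exp (-β ^ 2 / (2 * l ^ 2)) *
      ((2 / π) * (1 + l ^ 2)⁻¹) with hf_def
  have hf_eq : ∀ l : ℝ, 0 < l → f l = A * (Real.exp (-(c/l^2)) / (l*(1+l^2))) := by
    intro l hl
    have hsqrt : Real.sqrt (2*π*l^2) = S * l := by
      rw [Real.sqrt_mul (by positivity), Real.sqrt_sq hl.le]
    have harg : -β^2/(2*l^2) = -(c/l^2) := by
      rw [hc_def]; field_simp
    rw [hf_def]
    simp only [hsqrt, harg, hA_def]
    have h1 : (0:ℝ) < 1 + l^2 := by positivity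
    field_simp
  have hf_nonneg : ∀ l : ℝ, 0 ≤ f l := by
    intro l
    rw [hf_def]
    positivity
  -- integrability of f on Ioi 0
  have hf_cont : ContinuousOn f (Ioi (0:ℝ)) := by
    have c1 : ContinuousOn (fun l : ℝ => 1 / Real.sqrt (2*π*l^2)) (Ioi 0) := by
      apply ContinuousOn.div continuousOn_const
      · exact ((continuous_const.mul (continuous_pow 2)).sqrt).continuousOn
      · intro l hl
        have hl0 : (0:ℝ) < l := hl
        exact (Real.sqrt_pos.mpr (by positivity)).ne'
    have c2 : ContinuousOn (fun l : ℝ => Real.exp (-β^2/(2*l^2))) (Ioi 0) := by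
      apply Real.continuous_exp.comp_continuousOn
      apply ContinuousOn.div continuousOn_const
      · exact (continuous_const.mul (continuous_pow 2)).continuousOn
      · intro l hl
        have hl0 : (0:ℝ) < l := hl
        positivity
    have c3 : ContinuousOn (fun l : ℝ => (2/π) * (1+l^2)⁻¹) (Ioi 0) := by
      apply continuousOn_const.mul
      exact ContinuousOn.inv₀ (continuous_const.add (continuous_pow 2)).continuousOn
        (fun l _ => by positivity)
    exact (c1.mul c2).mul c3
  have hf_int : IntegrableOn f (Ioi (0:ℝ)) := by
    set K : ℝ := A * max (1/c) 1 with hK_def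
    have hKint : Integrable (fun l : ℝ => K * (1+l^2)⁻¹) (volume.restrict (Ioi 0)) :=
      (integrable_inv_one_add_sq.restrict).const_mul K
    refine Integrable.mono hKint (hf_cont.aestronglyMeasurable measurableSet_Ioi) ?_
    filter_upwards [ae_restrict_mem measurableSet_Ioi] with l hl
    have hl0 : 0 < l := hl
    have h1 : (0:ℝ) < 1 + l^2 := by positivity
    rw [Real.norm_eq_abs, Real.norm_eq_abs, abs_of_nonneg (hf_nonneg l),
      abs_of_nonneg (by positivity : (0:ℝ) ≤ K * (1+l^2)⁻¹)]
    rw [hf_eq l hl0]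
    have hbound : Real.exp (-(c/l^2)) / l ≤ max (1/c) 1 := by
      rcases le_total l 1 with h | h
      · have hx : 0 < c/l^2 := by positivity
        have hexp : Real.exp (-(c/l^2)) ≤ (c/l^2)⁻¹ := by
          rw [Real.exp_neg]
          apply inv_anti₀ hx
          linarith [Real.add_one_le_exp (c/l^2)]
        have : Real.exp (-(c/l^2)) / l ≤ (c/l^2)⁻¹ / l :=
          div_le_div_of_nonneg_right hexp hl0.le
        refine le_trans this (le_trans ?_ (le_max_left _ _))
        rw [inv_div]
        rw [div_div]
        rw [div_le_div_iff₀ (by positivity) hc]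
        nlinarith [mul_nonneg (mul_pos hc hl0).le (sub_nonneg.mpr h)]
      · have hexp : Real.exp (-(c/l^2)) ≤ 1 := by
          rw [Real.exp_le_one_iff]
          have : 0 < c/l^2 := by positivity
          linarith
        have : Real.exp (-(c/l^2)) / l ≤ 1/l :=
          div_le_div_of_nonneg_right hexp hl0.le
        refine le_trans this (le_trans ?_ (le_max_right _ _))
        rw [div_le_one hl0]
        exact h
    calc A * (Real.exp (-(c/l^2)) / (l*(1+l^2)))
        = A * (Real.exp (-(c/l^2)) / l) * (1+l^2)⁻¹ := by
          field_simp
      _ ≤ A * max (1/c) 1 * (1+l^2)⁻¹ := by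
          apply mul_le_mul_of_nonneg_right _ (by positivity)
          exact mul_le_mul_of_nonneg_left hbound hApos.le
      _ = K * (1+l^2)⁻¹ := by rw [hK_def]
  -- lower-bound function
  set g : ℝ → ℝ := fun l => A * ((1 - c/l^2)/(l*(1+l^2))) with hg_def
  obtain ⟨hg0_int, hg0_val⟩ := integral_lower c hc
  have hg_int : IntegrableOn g (Ioi a) := hg0_int.const_mul A
  have hg_val : ∫ l in Ioi a, g l = A * ((1+c)/2 * Real.log ((1+c)/c) - 1/2) := by
    rw [hg_def]
    rw [MeasureTheory.integral_const_mul, hg0_val]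
  have hgf : ∀ l ∈ Ioi a, g l ≤ f l := by
    intro l hl
    have hla : a < l := hl
    have hl0 : 0 < l := lt_trans hapos hla
    rw [hf_eq l hl0, hg_def]
    have h1 : (0:ℝ) < l*(1+l^2) := by positivity
    have hexp : 1 - c/l^2 ≤ Real.exp (-(c/l^2)) := by
      linarith [Real.add_one_le_exp (-(c/l^2))]
    exact mul_le_mul_of_nonneg_left (div_le_div_of_nonneg_right hexp h1.le) hApos.le
  have step1 : ∫ l in Ioi a, g l ≤ ∫ l in Ioi a, f l := by
    apply setIntegral_mono_on hg_int (hf_int.mono_set (Ioi_subset_Ioi hapos.le))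
      measurableSet_Ioi hgf
  have step2 : ∫ l in Ioi a, f l ≤ ∫ l in Ioi (0:ℝ), f l := by
    apply setIntegral_mono_set hf_int
    · filter_upwards with l using hf_nonneg l
    · exact HasSubset.Subset.eventuallyLE (Ioi_subset_Ioi hapos.le)
  have hmarg : hsMarginal β = ∫ l in Ioi (0:ℝ), f l := rfl
  -- final arithmetic
  have h32 : (2*π) ^ ((3:ℝ)/2) = (2*π) * S := by
    rw [show ((3:ℝ)/2) = 1 + (1/2 : ℝ) by norm_num, Real.rpow_add (by positivity),
      Real.rpow_one, hS_def, Real.sqrt_eq_rpow]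
  set L : ℝ := Real.log ((1+c)/c) with hL_def
  have hLb : Real.log (1 + 2/β^2) = L := by
    rw [hL_def]
    congr 1
    rw [hc_def]
    field_simp
    ring
  have hkey : 2 ≤ (2*c+1) * L := by
    have h := pade_log (1/c) (by positivity)
    have hrw : (1:ℝ) + 1/c = (1+c)/c := by field_simp; ring
    rw [hrw] at h
    rw [← hL_def] at h
    rw [div_le_iff₀ (by positivity : (0:ℝ) < 1/c + 2)] at h
    have h2 : 2 * (1/c) * c ≤ L * (1/c+2) * c := mul_le_mul_of_nonneg_right h hc.le
    have e1 : 2 * (1/c) * c = 2 := by field_simp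
    have e2 : L * (1/c+2) * c = (2*c+1) * L := by field_simp; ring
    linarith
  have hfinal : (1 / ((2*π) * S)) * L ≤ A * ((1+c)/2 * L - 1/2) := by
    have e1 : (1 / ((2*π) * S)) * L = (π*S)⁻¹ * (L/4) * 2 := by
      field_simp; ring
    have e2 : A * ((1+c)/2 * L - 1/2) = (π*S)⁻¹ * (((1+c) * L - 1)/2) * 2 := by
      rw [hA_def]; field_simp
    rw [e1, e2]
    apply mul_le_mul_of_nonneg_right _ (by norm_num)
    apply mul_le_mul_of_nonneg_left _ (by positivity)
    nlinarith [hkey]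
  calc (1 / (2 * π) ^ ((3 : ℝ) / 2)) * Real.log (1 + 2 / β ^ 2)
      = (1 / ((2*π) * S)) * L := by rw [h32, hLb]
    _ ≤ A * ((1+c)/2 * L - 1/2) := hfinal
    _ = ∫ l in Ioi a, g l := hg_val.symm
    _ ≤ ∫ l in Ioi a, f l := step1
    _ ≤ ∫ l in Ioi (0:ℝ), f l := step2
    _ = hsMarginal β := hmarg.symm

theorem stmt1 :
    (∀ β : ℝ, β ≠ 0 →
      (1 / (2 * Real.pi) ^ ((3 : ℝ) / 2)) * Real.log (1 + 2 / β ^ 2) ≤ hsMarginal β) ∧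
    Tendsto hsMarginal (nhdsWithin 0 {(0 : ℝ)}ᶜ) atTop := by
  refine ⟨fun β hβ => main_bound β hβ, ?_⟩
  have hC : 0 < 1 / (2 * π) ^ ((3 : ℝ) / 2) := by
    have := Real.rpow_pos_of_pos (by positivity : (0:ℝ) < 2*π) ((3:ℝ)/2)
    positivity
  have htend : Tendsto (fun β : ℝ => (1 / (2 * π) ^ ((3 : ℝ) / 2)) * Real.log (1 + 2 / β ^ 2))
      (nhdsWithin 0 {(0:ℝ)}ᶜ) atTop := by
    apply Tendsto.const_mul_atTop hC
    apply Real.tendsto_log_atTop.comp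
    apply tendsto_atTop_add_const_left
    have hsq : Tendsto (fun β : ℝ => β^2) (nhdsWithin 0 {(0:ℝ)}ᶜ) (nhdsWithin 0 (Ioi 0)) := by
      apply tendsto_nhdsWithin_of_tendsto_nhds_of_eventually_within
      · have : Tendsto (fun β : ℝ => β^2) (nhds 0) (nhds 0) := by
          simpa using (continuous_pow 2).tendsto (0:ℝ)
        exact this.mono_left nhdsWithin_le_nhds
      · filter_upwards [self_mem_nhdsWithin] with β hβ
        have hne : β ≠ 0 := hβ
        exact mem_Ioi.mpr (by positivity)
    have hinv : Tendsto (fun y : ℝ => y⁻¹) (nhdsWithin 0 (Ioi 0)) atTop :=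
      tendsto_inv_nhdsGT_zero
    have := (hinv.comp hsq).const_mul_atTop (show (0:ℝ) < 2 by norm_num)
    simpa [Function.comp, div_eq_mul_inv] using this
  exact tendsto_atTop_mono' _ (by
    filter_upwards [self_mem_nhdsWithin] with β hβ
    exact main_bound β hβ) htend
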